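/- Let a, p, b, q ∈ ℝ^d with F_{ap} ≠ F_{bq} and F_{ap} ∩ F_{bq} ≠ {0}. Then F_{ap} ∩ F_{bq} = (1 + ½e_{d+1}e_{d+2}i(p))·β·Cl_{d−1}^0·α·(1 − ½e_{d+1}e_{d+2}i(a)) for any α, β ∈ Spin(d) satisfying α·(i(b−a)/‖b−a‖)·α⁻¹ = e_d and β·e_d·β⁻¹ = i(q−p)/‖q−p‖. -/

import Mathlib

noncomputable section

open CliffordAlgebra

/-- The negative definite quadratic form `v ↦ -‖v‖²` on `ℝ^n`. -/
def Qn (n : ℕ) : QuadraticForm ℝ (Fin n → ℝ) :=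
  QuadraticMap.weightedSumSquares ℝ (fun _ : Fin n => (-1 : ℝ))

/-- The Clifford algebra `Cl_n = Cl(ℝ^n, -‖·‖²)`, with generators `e_1, …, e_n`
satisfying `e_j² = -1` and `e_je_k = -e_ke_j` for `j ≠ k`. -/
abbrev Cl (n : ℕ) := CliffordAlgebra (Qn n)

/-- The generators `e_1, …, e_n` of `Cl_n` (0-indexed). -/
def gC (n : ℕ) (j : Fin n) : Cl n := CliffordAlgebra.ι (Qn n) (Pi.single j 1)

/-- The conjugate `x̄ = α(t(x))`, where `α` is the grade involution and `t` the reversal. -/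
def conjC (n : ℕ) (x : Cl n) : Cl n := reverse (involute x)

/-- The linear embedding `i : ℝ^n → Cl_n`. -/
def iC (n : ℕ) (v : Fin n → ℝ) : Cl n := CliffordAlgebra.ι (Qn n) v

/-- Products of distinct generators of `Cl_n`, in increasing order of index. -/
def sprodC (n : ℕ) (s : Finset (Fin n)) : Cl n := ((s.sort (· ≤ ·)).map (gC n)).prod

/-- The even part `Cl_n^0`: the span of `1` and the products of an even number of
distinct generators. -/
def ClE0 (n : ℕ) : Submodule ℝ (Cl n) :=
  Submodule.span ℝ {x | ∃ s : Finset (Fin n), Even s.card ∧ x = sprodC n s}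

/-- The span of the `m`-terms of `Cl_n`: real multiples of products of `m` distinct
generators. -/
def mTermsC (n m : ℕ) : Submodule ℝ (Cl n) :=
  Submodule.span ℝ {x | ∃ s : Finset (Fin n), s.card = m ∧ x = sprodC n s}

/-- `Spin(n)` inside `Cl_n`. -/
def SpinC (n : ℕ) : Set (Cl n) :=
  {x | x ∈ ClE0 n ∧ x * conjC n x = 1 ∧
    ∀ v : Fin n → ℝ, ∃ w : Fin n → ℝ, x * iC n v * conjC n x = iC n w}

/-- The coefficient of `1` of an element of `Cl_n` (computed via the normalized trace
of left-multiplication, which agrees with the coefficient of `1` w.r.t. the standard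
monomial basis since `dim Cl_n = 2^n`). -/
def coeff1C (n : ℕ) (x : Cl n) : ℝ :=
  (2 ^ n : ℝ)⁻¹ * LinearMap.trace ℝ (Cl n) (LinearMap.mulLeft ℝ x)

/-- `X_d`, realized as the dual numbers over `Cl_{d+1}`; the dual-number generator `ε`
is central with `ε² = 0` and plays the role of `e_{d+2}`. -/
abbrev Xa (d : ℕ) := DualNumber (Cl (d + 1))

namespace X

variable (d : ℕ)

/-- `e_1, …, e_{d+1}` (0-indexed) inside `X_d`. -/
def e (j : Fin (d + 1)) : Xa d := TrivSqZeroExt.inl (gC (d + 1) j)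

/-- `e_{d+2}`. -/
def eps : Xa d := DualNumber.eps

/-- The generator `e_{d+1}`. -/
def eL : Xa d := e d (Fin.last d)

/-- The embedding of `ℝ^k` into `X_d` using the first `k` generators. -/
def iK (k : ℕ) (v : Fin k → ℝ) : Xa d :=
  TrivSqZeroExt.inl (CliffordAlgebra.ι (Qn (d + 1))
    (fun j : Fin (d + 1) => if h : (j : ℕ) < k then v ⟨j, h⟩ else 0))

/-- `i : ℝ^d → X_d`. -/
def iMap (v : Fin d → ℝ) : Xa d := iK d d v

/-- The conjugate `x̄ = α(t(x))` on `X_d`. -/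
def conj (x : Xa d) : Xa d :=
  TrivSqZeroExt.inl (conjC (d + 1) (TrivSqZeroExt.fst x)) +
    TrivSqZeroExt.inr (conjC (d + 1) (TrivSqZeroExt.snd x))

/-- The norm `N(x) = x·x̄`. -/
def Nm (x : Xa d) : Xa d := x * conj d x

/-- The generating family of `Z_d^0`: `e_1, …, e_d` and `e_{d+1}e_{d+2}`. -/
def zgen (j : Fin (d + 1)) : Xa d := if (j : ℕ) < d then e d j else eL d * eps d

/-- Products of distinct elements of a family, in increasing order of index. -/
def sprod (f : Fin (d + 1) → Xa d) (s : Finset (Fin (d + 1))) : Xa d :=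
  ((s.sort (· ≤ ·)).map f).prod

/-- `Z_d^0`: the span of `1` and the products of an even number of distinct elements
of `{e_1, …, e_d, e_{d+1}e_{d+2}}`. -/
def Z0 : Submodule ℝ (Xa d) :=
  Submodule.span ℝ {x | ∃ s : Finset (Fin (d + 1)), Even s.card ∧ x = sprod d (zgen d) s}

/-- The span of the `m`-terms of `Z_d^0`. -/
def Zterms (m : ℕ) : Submodule ℝ (Xa d) :=
  Submodule.span ℝ {x | ∃ s : Finset (Fin (d + 1)), s.card = m ∧ x = sprod d (zgen d) s}

/-- The even Clifford algebra `Cl_k^0` (for `k ≤ d`), viewed inside `X_d`. -/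
def ClE (k : ℕ) : Submodule ℝ (Xa d) :=
  Submodule.span ℝ {x | ∃ s : Finset (Fin (d + 1)),
    (∀ j ∈ s, (j : ℕ) < k) ∧ Even s.card ∧ x = sprod d (e d) s}

/-- `Spun(d)`. -/
def Spun : Set (Xa d) :=
  {z | z ∈ Z0 d ∧ Nm d z = 1 ∧
    ∀ v : Fin d → ℝ, ∃ w : Fin d → ℝ,
      z * (eps d * iMap d v + eL d) * conj d z = eps d * iMap d w + eL d}

/-- `Spin(k)` (for `k ≤ d`), viewed inside `X_d`. -/
def Spin (k : ℕ) : Set (Xa d) :=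
  {x | x ∈ ClE d k ∧ Nm d x = 1 ∧
    ∀ v : Fin k → ℝ, ∃ w : Fin k → ℝ, x * iK d k v * conj d x = iK d k w}

/-- `T_{ap}`: the elements of `Spun(d)` whose action takes `a` to `p`. -/
def T (a p : Fin d → ℝ) : Set (Xa d) :=
  {x | x ∈ Spun d ∧ x * (eps d * iMap d a + eL d) * conj d x = eps d * iMap d p + eL d}

/-- `F_{ap} = (1 + ½e_{d+1}e_{d+2}i(p))·Cl_d^0·(1 − ½e_{d+1}e_{d+2}i(a))`. -/
def F (a p : Fin d → ℝ) : Set (Xa d) :=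
  (fun y => (1 + (2 : ℝ)⁻¹ • (eL d * eps d * iMap d p)) * y *
      (1 - (2 : ℝ)⁻¹ • (eL d * eps d * iMap d a))) '' (ClE d d : Set (Xa d))

/-- The coefficient of `1` of an element of `X_d`. -/
def c1 (x : Xa d) : ℝ := coeff1C (d + 1) (TrivSqZeroExt.fst x)

/-- The index set for the 2-term coordinates of `Z_d^0`; it has `d(d+1)/2` elements.
A pair `(j,k)` with `k < last` indexes the 2-term `e_{j+1}e_{k+1}`, while a pair
`(j, last)` indexes the 2-term `e_{j+1}e_{d+1}e_{d+2}`. -/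
abbrev Idx := {p : Fin (d + 1) × Fin (d + 1) // p.1 < p.2}

/-- The coefficient of the 2-term indexed by `p`. -/
def c2 (p : Idx d) (x : Xa d) : ℝ :=
  if (p.1.2 : ℕ) < d
  then coeff1C (d + 1) (gC (d + 1) p.1.2 * gC (d + 1) p.1.1 * TrivSqZeroExt.fst x)
  else coeff1C (d + 1) (gC (d + 1) p.1.2 * gC (d + 1) p.1.1 * TrivSqZeroExt.snd x)

/-- The hyperplane `H_0 = {x₁ = 0}` (coefficient of `1` vanishes). -/
def H0 : Set (Xa d) := {x | c1 d x = 0}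

/-- The map `η_d = π' ∘ π`: scale so that the coefficient of `1` is `1`, then keep only
the 2-term coordinates. -/
def eta (x : Xa d) : Idx d → ℝ := fun p => (c1 d x)⁻¹ * c2 d p x

/-- `Spun(d)_+`: elements of `Spun(d)` with positive coefficient of `1`. -/
def SpunP : Set (Xa d) := {x | x ∈ Spun d ∧ 0 < c1 d x}

/-- `L_{ap} = η_d(T_{ap} \ H_0)`. -/
def L (a p : Fin d → ℝ) : Set (Idx d → ℝ) := eta d '' (T d a p \ H0 d)

end X

/-! Writing `X_d` as the dual numbers over `Cl_{d+1}` (with `ε = e_{d+2}`), the element of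
`F_{ap}` with `Cl_d^0`-part `y` is `y + ε·½e_{d+1}(i(p)y - y i(a))`, so `F_{ap} ∩ F_{bq}`
consists of those with `i(q-p)·y = y·i(b-a)`. Substituting `i(b-a) = ‖b-a‖·α⁻¹e_dα`,
`i(q-p) = ‖q-p‖·βe_dβ⁻¹` and `y = βcα` turns this into `‖q-p‖·e_d c = ‖b-a‖·c e_d`. As
`e_d² = -1`, a nonzero solution forces `‖q-p‖ = ‖b-a‖`, and then the solutions `c` are the
even elements commuting with `e_d`, which are exactly those of `Cl_{d-1}^0`. -/

lemma exists_ne_zero_of_image_ne_singleton_zero {M N : Type*} [Zero M] [Zero N] {f : M → N}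
    (hf : f 0 = 0) {S : Set M} (h : f '' S ≠ {0}) (h0 : (0 : M) ∈ S) : ∃ y ∈ S, y ≠ 0 := by
  by_contra! hS
  refine h (Set.eq_singleton_iff_unique_mem.mpr ⟨⟨0, h0, hf⟩, ?_⟩)
  rintro _ ⟨y, hy, rfl⟩
  rw [hS y hy, hf]

lemma one_add_inr_mul_inl_mul_one_sub_inr {R : Type*} [Ring R] (u v y : R) :
    (1 + TrivSqZeroExt.inr u) * TrivSqZeroExt.inl y * (1 - TrivSqZeroExt.inr v) =
      (TrivSqZeroExt.inl y + TrivSqZeroExt.inr (u * y - y * v) : DualNumber R) := by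
  ext <;> simp [sub_eq_neg_add]

section Conjugation

variable {A : Type*} [Ring A] [Algebra ℝ A]

lemma eq_of_smul_mul_eq_smul_mul {g c : A} (hg : g * g = -1) (hc : c ≠ 0) {r s : ℝ}
    (hr : 0 ≤ r) (hs : 0 ≤ s) (h : r • (g * c) = s • (c * g)) : r = s := by
  have hl : s • (g * c * g) = -r • c := by
    rw [mul_assoc, ← mul_smul_comm, ← h, mul_smul_comm, ← mul_assoc, hg, neg_one_mul, smul_neg,
      neg_smul]
  have hr' : r • (g * c * g) = -s • c := by
    rw [← smul_mul_assoc, h, smul_mul_assoc, mul_assoc, hg, mul_neg_one, smul_neg, neg_smul]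
  have : (r ^ 2 - s ^ 2) • c = 0 := by
    have := congrArg (r • ·) hl
    simp only [smul_comm r s, hr', smul_smul, smul_neg, neg_smul] at this
    rw [sub_smul, pow_two, pow_two, neg_inj.mp this.symm, sub_self]
  have hsq : r ^ 2 = s ^ 2 := sub_eq_zero.mp ((smul_eq_zero.mp this).resolve_right hc)
  exact (sq_eq_sq₀ hr hs).mp hsq

lemma smul_conj_mul_eq_iff (α β : Aˣ) (g y : A) (r s : ℝ) :
    r • (↑β * g * ↑β⁻¹) * y = y * s • (↑α⁻¹ * g * ↑α) ↔
      r • (g * (↑β⁻¹ * y * ↑α⁻¹)) = s • (↑β⁻¹ * y * ↑α⁻¹ * g) := by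
  rw [← Units.mul_right_inj β⁻¹, ← Units.mul_left_inj α⁻¹]
  simp only [smul_mul_assoc, mul_smul_comm, mul_assoc, Units.inv_mul_cancel_left,
    Units.mul_inv, mul_one]

lemma eq_of_smul_conj_mul_eq {g : A} (hg : g * g = -1) (α β : Aˣ) {y : A} (hy : y ≠ 0)
    {r s : ℝ} (hr : 0 ≤ r) (hs : 0 ≤ s)
    (h : r • (↑β * g * ↑β⁻¹) * y = y * s • (↑α⁻¹ * g * ↑α)) : r = s := by
  refine eq_of_smul_mul_eq_smul_mul hg ?_ hr hs ((smul_conj_mul_eq_iff α β g y r s).mp h)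
  rwa [Ne, Units.mul_left_eq_zero, Units.mul_right_eq_zero]

end Conjugation

section CliffordMonomials

variable {n : ℕ}

lemma Qn_apply (v : Fin n → ℝ) : Qn n v = -∑ i, v i * v i := by
  simp [Qn, QuadraticMap.weightedSumSquares_apply]

lemma gC_mul_self (j : Fin n) : gC n j * gC n j = -1 := by
  simp [gC, Qn_apply, Pi.single_apply]

lemma gC_mul_gC_of_ne {i j : Fin n} (h : i ≠ j) : gC n i * gC n j = -(gC n j * gC n i) := by
  refine eq_neg_of_add_eq_zero_left ?_
  rw [gC, gC, ι_mul_ι_add_swap, QuadraticMap.polar, Qn_apply, Qn_apply, Qn_apply]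
  simp [Pi.single_apply, h, h.symm, Finset.sum_add_distrib, mul_add]

lemma gC_ne_zero (j : Fin n) : gC n j ≠ 0 := fun h => by
  simpa [h] using gC_mul_self j

lemma sprodC_empty : sprodC n ∅ = 1 := by simp [sprodC]

lemma sprodC_insert_of_lt {j : Fin n} {s : Finset (Fin n)} (h : ∀ k ∈ s, j < k) :
    sprodC n (insert j s) = gC n j * sprodC n s := by
  rw [sprodC, Finset.sort_insert (r := (· ≤ ·)) (fun k hk => (h k hk).le)
    (fun hj => (h j hj).false)]
  simp [sprodC]

lemma gC_mul_sprodC (j : Fin n) (t : Finset (Fin n)) :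
    gC n j * sprodC n t = (-1 : ℝ) ^ (t.erase j).card • (sprodC n t * gC n j) := by
  induction t using Finset.induction_on_min with
  | empty => simp [sprodC_empty]
  | insert a s ha ih =>
    have has : a ∉ s := fun h => (ha a h).false
    rw [sprodC_insert_of_lt ha]
    rcases eq_or_ne j a with rfl | hja
    · conv_lhs => rw [ih, Finset.erase_eq_of_notMem has, mul_smul_comm, ← mul_assoc]
      rw [Finset.erase_insert has]
    · rw [Finset.erase_insert_of_ne hja.symm, Finset.card_insert_of_notMem
        (fun h => has (Finset.mem_of_mem_erase h)), ← mul_assoc, gC_mul_gC_of_ne hja, neg_mul,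
        mul_assoc, ih, mul_smul_comm, pow_succ, mul_neg_one, neg_smul, ← mul_assoc]

def monomialSpan (u : Finset (Fin n)) (i : ZMod 2) : Submodule ℝ (Cl n) :=
  Submodule.span ℝ {x | ∃ t ⊆ u, (t.card : ZMod 2) = i ∧ x = sprodC n t}

lemma sprodC_mem_monomialSpan {t u : Finset (Fin n)} (ht : t ⊆ u) :
    sprodC n t ∈ monomialSpan u t.card :=
  Submodule.subset_span ⟨t, ht, rfl, rfl⟩

lemma monomialSpan_le {u : Finset (Fin n)} {i : ZMod 2} {T : Submodule ℝ (Cl n)}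
    (h : ∀ t ⊆ u, (t.card : ZMod 2) = i → sprodC n t ∈ T) : monomialSpan u i ≤ T :=
  Submodule.span_le.mpr fun _ ⟨t, ht, hi, hx⟩ => hx ▸ h t ht hi

lemma monomialSpan_mono {u v : Finset (Fin n)} (h : u ⊆ v) (i : ZMod 2) :
    monomialSpan u i ≤ monomialSpan v i :=
  monomialSpan_le fun _ ht hi => hi ▸ sprodC_mem_monomialSpan (ht.trans h)

lemma one_mem_monomialSpan (u : Finset (Fin n)) : (1 : Cl n) ∈ monomialSpan u 0 := by
  simpa [sprodC_empty] using sprodC_mem_monomialSpan (Finset.empty_subset u)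

lemma gC_mul_sprodC_mem (j : Fin n) (s : Finset (Fin n)) :
    gC n j * sprodC n s ∈ monomialSpan (insert j s) (s.card + 1) := by
  induction s using Finset.induction_on_min generalizing j with
  | empty => simpa [sprodC_empty, sprodC] using sprodC_mem_monomialSpan (subset_refl {j})
  | insert a s ha ih =>
    have has : a ∉ s := fun h => (ha a h).false
    rw [sprodC_insert_of_lt ha, Finset.card_insert_of_notMem has]
    rcases lt_trichotomy j a with hja | rfl | hja
    · have hj : ∀ k ∈ insert a s, j < k := by
        simpa [hja] using fun k hk => hja.trans (ha k hk)
      rw [← sprodC_insert_of_lt ha, ← sprodC_insert_of_lt hj]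
      have hjs : j ∉ insert a s := fun h => (hj j h).false
      simpa [Finset.card_insert_of_notMem hjs, Finset.card_insert_of_notMem has] using
        sprodC_mem_monomialSpan (subset_refl (insert j (insert a s)))
    · rw [← mul_assoc, gC_mul_self, neg_one_mul]
      refine Submodule.neg_mem _ ?_
      have := sprodC_mem_monomialSpan (Finset.subset_insert j s)
      rw [show (s.card : ZMod 2) = s.card + 1 + 1 by
        rw [add_assoc, CharTwo.add_self_eq_zero, add_zero]] at this
      simpa using monomialSpan_mono (Finset.subset_insert j (insert j s)) _ this
    · rw [← mul_assoc, gC_mul_gC_of_ne hja.ne', neg_mul, mul_assoc]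
      refine Submodule.neg_mem _ ?_
      suffices monomialSpan (insert j s) (s.card + 1) ≤
          (monomialSpan (insert j (insert a s)) ((s.card + 1 : ℕ) + 1)).comap
            (LinearMap.mulLeft ℝ (gC n a)) from this (ih j)
      refine monomialSpan_le fun t ht hi => ?_
      have hat : ∀ k ∈ t, a < k := fun k hk => by
        rcases Finset.mem_insert.mp (ht hk) with rfl | hk
        exacts [hja, ha k hk]
      rw [Submodule.mem_comap, LinearMap.mulLeft_apply, ← sprodC_insert_of_lt hat]
      have hsub : insert a t ⊆ insert j (insert a s) := by
        rw [Finset.insert_subset_iff]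
        exact ⟨by simp, ht.trans (by grind)⟩
      convert sprodC_mem_monomialSpan hsub using 2
      rw [Finset.card_insert_of_notMem fun h => (hat a h).false]
      push_cast [hi]
      rfl

lemma gC_mul_mem_monomialSpan (j : Fin n) {u : Finset (Fin n)} {i : ZMod 2} {x : Cl n}
    (hx : x ∈ monomialSpan u i) : gC n j * x ∈ monomialSpan (insert j u) (i + 1) := by
  suffices monomialSpan u i ≤
      (monomialSpan (insert j u) (i + 1)).comap (LinearMap.mulLeft ℝ (gC n j)) from this hx
  refine monomialSpan_le fun t ht hi => ?_
  rw [Submodule.mem_comap, LinearMap.mulLeft_apply, ← hi]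
  exact monomialSpan_mono (Finset.insert_subset_insert j ht) _ (by
    simpa using gC_mul_sprodC_mem j t)

lemma mul_mem_monomialSpan {u v : Finset (Fin n)} {i i' : ZMod 2} {x y : Cl n}
    (hx : x ∈ monomialSpan u i) (hy : y ∈ monomialSpan v i') :
    x * y ∈ monomialSpan (u ∪ v) (i + i') := by
  suffices monomialSpan u i ≤
      (monomialSpan (u ∪ v) (i + i')).comap (LinearMap.mulRight ℝ y) from this hx
  refine monomialSpan_le fun t ht hi => ?_
  rw [Submodule.mem_comap, LinearMap.mulRight_apply, ← hi]
  refine monomialSpan_mono (Finset.union_subset_union ht subset_rfl) _ ?_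
  clear ht hi
  induction t using Finset.induction_on_min with
  | empty => simpa [sprodC_empty] using hy
  | insert a s ha ih =>
    have has : a ∉ s := fun h => (ha a h).false
    rw [sprodC_insert_of_lt ha, mul_assoc, Finset.card_insert_of_notMem has, Finset.insert_union]
    convert gC_mul_mem_monomialSpan a ih using 2
    push_cast
    ring

lemma mul_mem_monomialSpan_zero {u : Finset (Fin n)} {x y : Cl n}
    (hx : x ∈ monomialSpan u 0) (hy : y ∈ monomialSpan u 0) : x * y ∈ monomialSpan u 0 := by
  simpa using mul_mem_monomialSpan hx hy

open scoped Pointwise in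
lemma span_range_sprodC : Submodule.span ℝ (Set.range (sprodC n)) = ⊤ := by
  set S := Submodule.span ℝ (Set.range (sprodC n))
  have hmono : ∀ u i, monomialSpan u i ≤ S :=
    fun u i => monomialSpan_le fun t _ _ => Submodule.subset_span ⟨t, rfl⟩
  refine Submodule.eq_top_iff'.mpr fun x => ?_
  induction x using CliffordAlgebra.induction with
  | algebraMap r =>
    rw [Algebra.algebraMap_eq_smul_one]
    exact S.smul_mem r (hmono ∅ 0 (one_mem_monomialSpan ∅))
  | ι v =>
    rw [← Finset.univ_sum_single v, map_sum]
    refine S.sum_mem fun j _ => ?_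
    rw [show Pi.single j (v j) = v j • (Pi.single j 1 : Fin n → ℝ) by simp [← Pi.single_smul],
      map_smul]
    refine S.smul_mem _ (Submodule.subset_span ⟨{j}, ?_⟩)
    simp [sprodC, gC]
  | mul x y hx hy =>
    have hSS : Set.range (sprodC n) * Set.range (sprodC n) ⊆ S := by
      rintro _ ⟨_, ⟨s, rfl⟩, _, ⟨t, rfl⟩, rfl⟩
      exact hmono _ _ (mul_mem_monomialSpan (sprodC_mem_monomialSpan subset_rfl)
        (sprodC_mem_monomialSpan subset_rfl))
    have := Submodule.mul_mem_mul hx hy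
    rw [Submodule.span_mul_span] at this
    exact Submodule.span_le.mpr hSS this
  | add x y hx hy => exact S.add_mem hx hy

instance : Module.Finite ℝ (Cl n) :=
  ⟨Submodule.fg_def.mpr ⟨_, Set.finite_range _, span_range_sprodC⟩⟩

-- Artinian rings are Dedekind-finite, so `x * x̄ = 1` makes `x̄` a two-sided inverse.
instance : IsArtinianRing (Cl n) := IsArtinianRing.of_finite ℝ (Cl n)

lemma conjC_mul (x y : Cl n) : conjC n (x * y) = conjC n y * conjC n x := by
  simp [conjC, reverse.map_mul]

lemma conjC_gC (j : Fin n) : conjC n (gC n j) = -gC n j := by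
  simp [conjC, gC]

lemma conjC_sprodC_mem (t : Finset (Fin n)) : conjC n (sprodC n t) ∈ monomialSpan t t.card := by
  induction t using Finset.induction_on_min with
  | empty => simpa [sprodC_empty, conjC] using one_mem_monomialSpan (∅ : Finset (Fin n))
  | insert a s ha ih =>
    have has : a ∉ s := fun h => (ha a h).false
    rw [sprodC_insert_of_lt ha, conjC_mul, conjC_gC, mul_neg, Finset.card_insert_of_notMem has,
      Finset.insert_eq, Finset.union_comm]
    refine Submodule.neg_mem _ ?_
    convert mul_mem_monomialSpan ih (sprodC_mem_monomialSpan (subset_refl {a})) using 2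
    · simp
    · simp [sprodC]

lemma conjC_mem_monomialSpan {u : Finset (Fin n)} {i : ZMod 2} {x : Cl n}
    (hx : x ∈ monomialSpan u i) : conjC n x ∈ monomialSpan u i := by
  suffices monomialSpan u i ≤ (monomialSpan u i).comap
      (reverse.comp (involute : Cl n →ₐ[ℝ] Cl n).toLinearMap) from this hx
  exact monomialSpan_le fun t ht hi =>
    hi ▸ monomialSpan_mono ht _ (conjC_sprodC_mem t)

lemma commute_gC_of_mem_monomialSpan {j : Fin n} {u : Finset (Fin n)} (hj : j ∉ u) {x : Cl n}
    (hx : x ∈ monomialSpan u 0) : Commute (gC n j) x := by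
  suffices monomialSpan u 0 ≤ Subalgebra.toSubmodule (Subalgebra.centralizer ℝ {gC n j}) by
    simpa [Subalgebra.mem_centralizer_iff, Commute, SemiconjBy, eq_comm] using this hx
  refine monomialSpan_le fun t ht hi => ?_
  rw [ZMod.natCast_eq_zero_iff_even] at hi
  simp [Subalgebra.mem_centralizer_iff, gC_mul_sprodC,
    Finset.erase_eq_of_notMem (fun h => hj (ht h)), hi.neg_one_pow]

lemma mem_monomialSpan_erase_of_commute {j : Fin n} {u : Finset (Fin n)} {x : Cl n}
    (hx : x ∈ monomialSpan u 0) (hc : Commute (gC n j) x) : x ∈ monomialSpan (u.erase j) 0 := by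
  -- `P` kills the even monomials containing `eⱼ`, fixes the others, and fixes `x`.
  let P : Cl n →ₗ[ℝ] Cl n := (2 : ℝ)⁻¹ •
    (LinearMap.id - LinearMap.mulLeft ℝ (gC n j) ∘ₗ LinearMap.mulRight ℝ (gC n j))
  have hP : ∀ y, Commute (gC n j) y → P y = y := fun y hy => by
    simp only [P, LinearMap.smul_apply, LinearMap.sub_apply, LinearMap.id_apply,
      LinearMap.comp_apply, LinearMap.mulLeft_apply, LinearMap.mulRight_apply, ← mul_assoc,
      hy.eq, mul_assoc y, gC_mul_self, mul_neg_one, sub_neg_eq_add, ← two_smul ℝ y, smul_smul]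
    norm_num
  suffices monomialSpan u 0 ≤ (monomialSpan (u.erase j) 0).comap P from hP x hc ▸ this hx
  refine monomialSpan_le fun t ht hi => ?_
  rw [ZMod.natCast_eq_zero_iff_even] at hi
  by_cases hjt : j ∈ t
  · have hodd : Odd (t.erase j).card := by
      rw [Finset.card_erase_of_mem hjt]
      exact Nat.Even.sub_odd (Finset.card_pos.mpr ⟨j, hjt⟩) hi odd_one
    have : gC n j * sprodC n t * gC n j = sprodC n t := by
      rw [gC_mul_sprodC, hodd.neg_one_pow, neg_one_smul, neg_mul, mul_assoc, gC_mul_self,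
        mul_neg_one, neg_neg]
    simp [P, ← mul_assoc, this]
  · have hmem : sprodC n t ∈ monomialSpan (u.erase j) 0 := by
      have := sprodC_mem_monomialSpan (t := t) (u := u.erase j)
        (fun k hk => Finset.mem_erase.mpr ⟨fun h => hjt (h ▸ hk), ht hk⟩)
      rwa [(ZMod.natCast_eq_zero_iff_even).mpr hi] at this
    rw [Submodule.mem_comap, hP _ (commute_gC_of_mem_monomialSpan (Finset.notMem_erase j u) hmem)]
    exact hmem

lemma setOf_smul_conj_mul_eq {u : Finset (Fin n)} (j : Fin n) (α β : (Cl n)ˣ)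
    (hα : (α : Cl n) ∈ monomialSpan u 0) (hα' : ((α⁻¹ : (Cl n)ˣ) : Cl n) ∈ monomialSpan u 0)
    (hβ : (β : Cl n) ∈ monomialSpan u 0) (hβ' : ((β⁻¹ : (Cl n)ˣ) : Cl n) ∈ monomialSpan u 0)
    {r : ℝ} (hr : r ≠ 0) :
    {y | y ∈ monomialSpan u 0 ∧
        r • (↑β * gC n j * ↑β⁻¹) * y = y * r • (↑α⁻¹ * gC n j * ↑α)} =
      (fun c => (β : Cl n) * c * α) '' monomialSpan (u.erase j) 0 := by
  ext y
  simp only [Set.mem_image, SetLike.mem_coe, smul_conj_mul_eq_iff,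
    smul_right_inj hr]
  constructor
  · rintro ⟨hy, h⟩
    refine ⟨_, mem_monomialSpan_erase_of_commute
      (mul_mem_monomialSpan_zero (mul_mem_monomialSpan_zero hβ' hy) hα') h, ?_⟩
    simp [mul_assoc]
  · rintro ⟨c, hc, rfl⟩
    have hcu : c ∈ monomialSpan u 0 := monomialSpan_mono (Finset.erase_subset j u) _ hc
    refine ⟨mul_mem_monomialSpan_zero (mul_mem_monomialSpan_zero hβ hcu) hα, ?_⟩
    simpa [mul_assoc] using (commute_gC_of_mem_monomialSpan (Finset.notMem_erase j u) hc).eq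

end CliffordMonomials

namespace X

variable {d : ℕ}

def firstGens (d k : ℕ) : Finset (Fin (d + 1)) := {j | (j : ℕ) < k}

lemma mem_firstGens {k : ℕ} {j : Fin (d + 1)} : j ∈ firstGens d k ↔ (j : ℕ) < k := by
  simp [firstGens]

lemma firstGens_erase (h : d - 1 < d + 1) :
    (firstGens d d).erase ⟨d - 1, h⟩ = firstGens d (d - 1) := by
  ext j
  simp only [Finset.mem_erase, mem_firstGens, ne_eq, Fin.ext_iff]
  omega

lemma last_notMem_firstGens : Fin.last d ∉ firstGens d d := by
  simp [mem_firstGens]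

lemma sprod_e (s : Finset (Fin (d + 1))) :
    sprod d (e d) s = TrivSqZeroExt.inl (sprodC (d + 1) s) := by
  rw [sprod, sprodC,
    show e d = TrivSqZeroExt.inlHom (Cl (d + 1)) (Cl (d + 1)) ∘ gC (d + 1) from rfl, ← List.map_map, ← map_list_prod]
  rfl

lemma coe_ClE (k : ℕ) :
    (ClE d k : Set (Xa d)) = TrivSqZeroExt.inl '' monomialSpan (firstGens d k) 0 := by
  have : ClE d k = (monomialSpan (firstGens d k) 0).map
      (TrivSqZeroExt.inlAlgHom ℝ (Cl (d + 1)) (Cl (d + 1))).toLinearMap := by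
    rw [ClE, monomialSpan, Submodule.map_span]
    congr 1
    ext x
    simp [sprod_e, mem_firstGens, Finset.subset_iff, ZMod.natCast_eq_zero_iff_even, and_assoc,
      eq_comm]
  rw [this, Submodule.map_coe]
  rfl

variable (d) in
def iCl : (Fin d → ℝ) →ₗ[ℝ] Cl (d + 1) :=
  ι (Qn (d + 1)) ∘ₗ
    { toFun := fun v j => if h : (j : ℕ) < d then v ⟨j, h⟩ else 0
      map_add' := fun v w => by ext j; by_cases h : (j : ℕ) < d <;> simp [h]
      map_smul' := fun c v => by ext j; by_cases h : (j : ℕ) < d <;> simp [h] }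

lemma iMap_eq (v : Fin d → ℝ) : iMap d v = TrivSqZeroExt.inl (iCl d v) := rfl

lemma conj_inl (x : Cl (d + 1)) :
    conj d (TrivSqZeroExt.inl x) = TrivSqZeroExt.inl (conjC (d + 1) x) := by
  simp [conj, conjC]

variable (d) in
def sandwich (a p : Fin d → ℝ) (x : Xa d) : Xa d :=
  (1 + (2 : ℝ)⁻¹ • (eL d * eps d * iMap d p)) * x * (1 - (2 : ℝ)⁻¹ • (eL d * eps d * iMap d a))

lemma F_eq_image (a p : Fin d → ℝ) : F d a p = sandwich d a p '' ClE d d := rfl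

lemma sandwich_inl (a p : Fin d → ℝ) {y : Cl (d + 1)} (hy : Commute (gC (d + 1) (Fin.last d)) y) :
    sandwich d a p (TrivSqZeroExt.inl y) = TrivSqZeroExt.inl y + TrivSqZeroExt.inr
      ((2 : ℝ)⁻¹ • (gC (d + 1) (Fin.last d) * (iCl d p * y - y * iCl d a))) := by
  have h : ∀ v, (2 : ℝ)⁻¹ • (eL d * eps d * iMap d v) =
      TrivSqZeroExt.inr ((2 : ℝ)⁻¹ • (gC (d + 1) (Fin.last d) * iCl d v)) := fun v => by
    rw [eL, e, eps, DualNumber.eps, iMap_eq, TrivSqZeroExt.inl_mul_inr,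
      TrivSqZeroExt.inr_mul_inl, ← TrivSqZeroExt.inr_smul, smul_eq_mul, mul_one]
    rfl
  rw [sandwich, h, h, one_add_inr_mul_inl_mul_one_sub_inr, smul_mul_assoc, mul_smul_comm,
    ← smul_sub, mul_assoc, ← mul_assoc y, ← hy.eq, mul_assoc, ← mul_sub]

lemma commute_gC_last {y : Cl (d + 1)} (hy : y ∈ monomialSpan (firstGens d d) 0) :
    Commute (gC (d + 1) (Fin.last d)) y :=
  commute_gC_of_mem_monomialSpan last_notMem_firstGens hy

lemma sandwich_inl_eq_sandwich_inl_iff {a p b q : Fin d → ℝ} {y z : Cl (d + 1)}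
    (hy : y ∈ monomialSpan (firstGens d d) 0) (hz : z ∈ monomialSpan (firstGens d d) 0) :
    sandwich d a p (TrivSqZeroExt.inl y) = sandwich d b q (TrivSqZeroExt.inl z) ↔
      y = z ∧ iCl d (q - p) * y = y * iCl d (b - a) := by
  rw [sandwich_inl a p (commute_gC_last hy), sandwich_inl b q (commute_gC_last hz),
    TrivSqZeroExt.ext_iff]
  simp only [TrivSqZeroExt.fst_add, TrivSqZeroExt.fst_inl, TrivSqZeroExt.fst_inr, add_zero,
    TrivSqZeroExt.snd_add, TrivSqZeroExt.snd_inl, TrivSqZeroExt.snd_inr, zero_add]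
  refine and_congr_right fun hyz => ?_
  subst hyz
  have hg : IsLeftRegular (gC (d + 1) (Fin.last d)) :=
    (IsUnit.of_mul_eq_one (-gC (d + 1) (Fin.last d)) (by simp [gC_mul_self])).isRegular.left
  rw [smul_right_inj (by norm_num), hg.eq_iff, map_sub, map_sub, sub_mul, mul_sub,
    sub_eq_sub_iff_add_eq_add, sub_eq_sub_iff_add_eq_add, add_comm (y * _), eq_comm]

lemma F_inter_F (a p b q : Fin d → ℝ) :
    F d a p ∩ F d b q = sandwich d a p '' (TrivSqZeroExt.inl ''
      {y | y ∈ monomialSpan (firstGens d d) 0 ∧ iCl d (q - p) * y = y * iCl d (b - a)}) := by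
  rw [F_eq_image, F_eq_image, coe_ClE, Set.image_image, Set.image_image, Set.image_image]
  ext x
  constructor
  · rintro ⟨⟨y, hy, rfl⟩, z, hz, hzy⟩
    obtain ⟨rfl, h⟩ := (sandwich_inl_eq_sandwich_inl_iff hy hz).mp hzy.symm
    exact ⟨y, ⟨hy, h⟩, rfl⟩
  · rintro ⟨y, ⟨hy, h⟩, rfl⟩
    exact ⟨⟨y, hy, rfl⟩, y, hy, ((sandwich_inl_eq_sandwich_inl_iff hy hy).mpr ⟨rfl, h⟩).symm⟩

lemma iCl_eq_smul_of_conj_eq (α : (Cl (d + 1))ˣ) {j : Fin (d + 1)} {v : Fin d → ℝ} {r : ℝ}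
    (h : TrivSqZeroExt.inl (α : Cl (d + 1)) * iMap d (r⁻¹ • v) *
      TrivSqZeroExt.inl (↑α⁻¹ : Cl (d + 1)) = e d j) :
    r ≠ 0 ∧ iCl d v = r • (↑α⁻¹ * gC (d + 1) j * ↑α) := by
  simp only [iMap_eq, e, TrivSqZeroExt.inl_mul_inl] at h
  replace h := TrivSqZeroExt.inl_injective h
  have hr : r ≠ 0 := fun hr => gC_ne_zero j (by simp [← h, hr])
  exact ⟨hr, (inv_smul_eq_iff₀ hr).mp (by simp [← h, mul_assoc])⟩

lemma iCl_eq_smul_of_eq_conj (β : (Cl (d + 1))ˣ) {j : Fin (d + 1)} {w : Fin d → ℝ} {r : ℝ}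
    (h : TrivSqZeroExt.inl (β : Cl (d + 1)) * e d j * TrivSqZeroExt.inl (↑β⁻¹ : Cl (d + 1)) =
      iMap d (r⁻¹ • w)) :
    iCl d w = r • (↑β * gC (d + 1) j * ↑β⁻¹) := by
  simp only [iMap_eq, e, TrivSqZeroExt.inl_mul_inl] at h
  replace h := TrivSqZeroExt.inl_injective h
  have hr : r ≠ 0 := fun hr => gC_ne_zero j (by
    simpa [hr] using congrArg ((β⁻¹ : (Cl (d + 1))ˣ) * · * (β : Cl (d + 1))) h)
  exact (inv_smul_eq_iff₀ hr).mp (by simp [h])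

lemma exists_unit_of_mem_Spin {x : Xa d} (hx : x ∈ Spin d d) :
    ∃ α : (Cl (d + 1))ˣ, x = TrivSqZeroExt.inl ↑α ∧ conj d x = TrivSqZeroExt.inl ↑α⁻¹ ∧
      ↑α ∈ monomialSpan (firstGens d d) 0 ∧ ↑α⁻¹ ∈ monomialSpan (firstGens d d) 0 := by
  obtain ⟨hx, hN, -⟩ := hx
  rw [← SetLike.mem_coe, coe_ClE] at hx
  obtain ⟨y, hy, rfl⟩ := hx
  have hyy : y * conjC (d + 1) y = 1 :=
    TrivSqZeroExt.inl_injective (by rwa [Nm, conj_inl, TrivSqZeroExt.inl_mul_inl] at hN)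
  exact ⟨Units.mkOfMulEqOne _ _ hyy, rfl, conj_inl y, hy, conjC_mem_monomialSpan hy⟩

end X

/-- Let `a, p, b, q ∈ ℝ^d` with `F_{ap} ≠ F_{bq}` and
`F_{ap} ∩ F_{bq} ≠ {0}`. Then
`F_{ap} ∩ F_{bq} = (1 + ½e_{d+1}e_{d+2}i(p))·β·Cl_{d−1}^0·α·(1 − ½e_{d+1}e_{d+2}i(a))`
for any `α, β ∈ Spin(d)` satisfying `α·(i(b−a)/‖b−a‖)·α⁻¹ = e_d` and
`β·e_d·β⁻¹ = i(q−p)/‖q−p‖` (Euclidean norms). -/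
theorem F_inter_characterization (d : ℕ) (a p b q : Fin d → ℝ)
    (hint : X.F d a p ∩ X.F d b q ≠ {0})
    (al be : Xa d) (hal : al ∈ X.Spin d d) (hbe : be ∈ X.Spin d d)
    (hal2 : al * X.iMap d ((Real.sqrt (∑ j, (b j - a j) ^ 2))⁻¹ • (b - a)) * X.conj d al
        = X.e d ⟨d - 1, by omega⟩)
    (hbe2 : be * X.e d ⟨d - 1, by omega⟩ * X.conj d be
        = X.iMap d ((Real.sqrt (∑ j, (q j - p j) ^ 2))⁻¹ • (q - p))) :
    X.F d a p ∩ X.F d b q =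
      (fun c => (1 + (2 : ℝ)⁻¹ • (X.eL d * X.eps d * X.iMap d p)) * (be * c * al) *
          (1 - (2 : ℝ)⁻¹ • (X.eL d * X.eps d * X.iMap d a))) ''
        (X.ClE d (d - 1) : Set (Xa d)) := by
  obtain ⟨α, rfl, hconjα, hα, hα'⟩ := X.exists_unit_of_mem_Spin hal
  obtain ⟨β, rfl, hconjβ, hβ, hβ'⟩ := X.exists_unit_of_mem_Spin hbe
  rw [hconjα] at hal2
  rw [hconjβ] at hbe2
  obtain ⟨hnb, hba⟩ := X.iCl_eq_smul_of_conj_eq α hal2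
  have hqp := X.iCl_eq_smul_of_eq_conj β hbe2
  rw [X.F_inter_F, Set.image_image] at hint ⊢
  obtain ⟨y, hy, hyne⟩ := exists_ne_zero_of_image_ne_singleton_zero (by simp [X.sandwich]) hint
    ⟨zero_mem _, by simp⟩
  have hnorm := eq_of_smul_conj_mul_eq (gC_mul_self _) α β hyne (Real.sqrt_nonneg _)
    (Real.sqrt_nonneg _) (hqp ▸ hba ▸ hy.2)
  rw [hba, hqp, hnorm, setOf_smul_conj_mul_eq _ α β hα hα' hβ hβ' hnb, X.firstGens_erase,
    X.coe_ClE, Set.image_image, Set.image_image]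
  simp only [TrivSqZeroExt.inl_mul_inl]
  rfl
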